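/- Explicit formula for truncated Cauchy–Carlitz numbers: for every integer N ≥ 0 and every n ≥ 1, CC_{N,n} = Π(n) Σ_{k=1}^{n} (−L_N)^k Σ_{i_1,…,i_k ≥ 1, r^{N+i_1}+⋯+r^{N+i_k} = n + k r^N} (−1)^{i_1+⋯+i_k}/(L_{N+i_1} ⋯ L_{N+i_k}), where the inner sum is over all ordered k-tuples of positive integers (i_1,…,i_k) with r^{N+i_1}+⋯+r^{N+i_k} = n + k r^N. -/

import Mathlib

/-!
Carlitz module: `Fq` is a finite field with `r = Fintype.card Fq` elements (so `r` is a
power of a prime `p`), and `K = Fq(T)` is the field of rational functions over `Fq`.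
-/

noncomputable section

variable (Fq : Type*) [Field Fq] [Fintype Fq]

/-- `r`, the number of elements of the finite field `Fq` (a prime power). -/
def rq : ℕ := Fintype.card Fq

/-- `[i] = T^{r^i} − T` in `K = Fq(T)`. -/
def carlitzBracket (i : ℕ) : RatFunc Fq := RatFunc.X ^ rq Fq ^ i - RatFunc.X

/-- `D_0 = 1`, `D_i = [i]·D_{i−1}^r`. -/
def carlitzD : ℕ → RatFunc Fq
  | 0 => 1
  | i + 1 => carlitzBracket Fq (i + 1) * carlitzD i ^ rq Fq

/-- `L_0 = 1`, `L_i = [i]·L_{i−1}`. -/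
def carlitzL : ℕ → RatFunc Fq
  | 0 => 1
  | i + 1 => carlitzBracket Fq (i + 1) * carlitzL i

/-- The Carlitz factorial `Π(i) = ∏_j D_j^{c_j}`, where `i = Σ_j c_j r^j` with
`0 ≤ c_j < r` is the base-`r` expansion of `i`. -/
def carlitzPi (i : ℕ) : RatFunc Fq :=
  ∏ j ∈ Finset.range (i + 1), carlitzD Fq j ^ (Nat.digits (rq Fq) i).getD j 0

/-- The power series `Σ_{j=0}^∞ (D_N/D_{N+j}) x^{r^{N+j} − r^N}`, i.e.
`(e_C(x) − Σ_{i=0}^{N−1} x^{r^i}/D_i)·D_N/x^{r^N}`; it has constant term `1`. -/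
def bcSeries (N : ℕ) : PowerSeries (RatFunc Fq) :=
  PowerSeries.mk fun m => ∑ j ∈ Finset.range (m + 1),
    if m = rq Fq ^ (N + j) - rq Fq ^ N then carlitzD Fq N / carlitzD Fq (N + j) else 0

/-- The truncated Bernoulli–Carlitz number `BC_{N,n}`: `BC_{N,n}/Π(n)` is the `n`-th
coefficient of the multiplicative inverse of the power series
`Σ_{j=0}^∞ (D_N/D_{N+j}) x^{r^{N+j} − r^N}`. -/
def truncBC (N n : ℕ) : RatFunc Fq :=
  carlitzPi Fq n * PowerSeries.coeff n (bcSeries Fq N)⁻¹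

/-- The power series `Σ_{j=0}^∞ (−1)^j (L_N/L_{N+j}) x^{r^{N+j} − r^N}`, i.e.
`(log_C(x) − Σ_{i=0}^{N−1} (−1)^i x^{r^i}/L_i)·(−1)^N L_N/x^{r^N}`;
it has constant term `1`. -/
def ccSeries (N : ℕ) : PowerSeries (RatFunc Fq) :=
  PowerSeries.mk fun m => ∑ j ∈ Finset.range (m + 1),
    if m = rq Fq ^ (N + j) - rq Fq ^ N then
      (-1) ^ j * carlitzL Fq N / carlitzL Fq (N + j) else 0

/-- The truncated Cauchy–Carlitz number `CC_{N,n}`: `CC_{N,n}/Π(n)` is the `n`-th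
coefficient of the multiplicative inverse of the power series
`Σ_{j=0}^∞ (−1)^j (L_N/L_{N+j}) x^{r^{N+j} − r^N}`. -/
def truncCC (N n : ℕ) : RatFunc Fq :=
  carlitzPi Fq n * PowerSeries.coeff n (ccSeries Fq N)⁻¹

/-- The tail `e_C(z) − 𝓔_{N−1}(z) = Σ_{i=N}^∞ z^{r^i}/D_i` of the Carlitz exponential. -/
def carlitzExpTail (N : ℕ) : PowerSeries (RatFunc Fq) :=
  PowerSeries.mk fun m => ∑ j ∈ Finset.range (m + 1),
    if m = rq Fq ^ (N + j) then (carlitzD Fq (N + j))⁻¹ else 0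

/-- The associated Stirling–Carlitz number of the second kind `{n brace k}_{C,≥N}`,
defined by `(e_C(z) − 𝓔_{N−1}(z))^k/Π(k) = Σ_n {n brace k}_{C,≥N} z^n/Π(n)`. -/
def stirling2C (N k n : ℕ) : RatFunc Fq :=
  carlitzPi Fq n / carlitzPi Fq k * PowerSeries.coeff n (carlitzExpTail Fq N ^ k)

/-- The tail `log_C(z) − 𝓕_{N−1}(z) = Σ_{i=N}^∞ (−1)^i z^{r^i}/L_i` of the Carlitz
logarithm. -/
def carlitzLogTail (N : ℕ) : PowerSeries (RatFunc Fq) :=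
  PowerSeries.mk fun m => ∑ j ∈ Finset.range (m + 1),
    if m = rq Fq ^ (N + j) then (-1) ^ (N + j) * (carlitzL Fq (N + j))⁻¹ else 0

/-- The associated Stirling–Carlitz number of the first kind `{n brack k}_{C,≥N}`,
defined by `(log_C(z) − 𝓕_{N−1}(z))^k/Π(k) = Σ_n {n brack k}_{C,≥N} z^n/Π(n)`. -/
def stirling1C (N k n : ℕ) : RatFunc Fq :=
  carlitzPi Fq n / carlitzPi Fq k * PowerSeries.coeff n (carlitzLogTail Fq N ^ k)


/-!
Write `ccSeries = 1 - g` with `g(0) = 0`. Then `(1 - g)⁻¹ = Σ_k g^k`, and for `n ≥ 1` only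
`1 ≤ k ≤ n` contribute to the `n`-th coefficient. The series `g` is lacunary: it is supported on
the pairwise distinct exponents `r^{N+i} − r^N` (`i ≥ 1`), with coefficients
`−L_N · (−1)^i / L_{N+i}`, so the `n`-th coefficient of `g^k` is the sum, over the `k`-tuples
`(i_1, …, i_k)` whose exponents add up to `n`, of the products of these coefficients.
-/

namespace PowerSeries

theorem coeff_inv_one_sub_eq_sum_coeff_pow {k : Type*} [Field k] {φ : k⟦X⟧}
    (hφ : constantCoeff φ = 0) {n : ℕ} (hn : n ≠ 0) :
    coeff n (1 - φ)⁻¹ = ∑ i ∈ Finset.Icc 1 n, coeff n (φ ^ i) := by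
  have hunit : (1 - φ) * (1 - φ)⁻¹ = 1 := PowerSeries.mul_inv_cancel _ (by simp [hφ])
  have hgeom : ∑ i ∈ Finset.range (n + 1), φ ^ i = (1 - φ)⁻¹ - φ ^ (n + 1) * (1 - φ)⁻¹ :=
    calc ∑ i ∈ Finset.range (n + 1), φ ^ i
        = (∑ i ∈ Finset.range (n + 1), φ ^ i) * ((1 - φ) * (1 - φ)⁻¹) := by rw [hunit, mul_one]
      _ = _ := by rw [← mul_assoc, geom_sum_mul_neg]; ring
  have hvanish : coeff n (φ ^ (n + 1) * (1 - φ)⁻¹) = 0 := by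
    have hdvd : X ^ (n + 1) ∣ φ ^ (n + 1) * (1 - φ)⁻¹ :=
      (pow_dvd_pow_of_dvd (X_dvd_iff.2 hφ) _).mul_right _
    exact X_pow_dvd_iff.1 hdvd n n.lt_succ_self
  have hsum := congrArg (coeff n) hgeom
  rw [map_sub, hvanish, sub_zero, map_sum, Finset.range_eq_Ico,
    Finset.sum_eq_sum_Ico_succ_bot n.succ_pos, pow_zero, coeff_one, if_neg hn, zero_add, zero_add,
    Nat.succ_eq_add_one, Finset.Ico_add_one_right_eq_Icc] at hsum
  exact hsum.symm

/-- Coefficients of powers of a lacunary series `φ = Σ_{i, p i} aᵢ X^{e i}`. -/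
theorem coeff_pow_eq_finsum_of_coeff_ne_zero {R : Type*} [CommSemiring R] (φ : R⟦X⟧)
    {e : ℕ → ℕ} (he : e.Injective) {p : ℕ → Prop}
    (hφ : ∀ m, coeff m φ ≠ 0 → ∃ i, p i ∧ e i = m) (k n : ℕ) :
    coeff n (φ ^ k) = ∑ᶠ (i : Fin k → ℕ) (_ : (∀ j, p (i j)) ∧ ∑ j, e (i j) = n),
      ∏ j, coeff (e (i j)) φ := by
  classical
  set f : (Fin k → ℕ) → (Fin k →₀ ℕ) := fun i => Finsupp.equivFunOnFinite.symm (e ∘ i)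
  have hf : f.Injective := fun i i' h =>
    funext fun j => he (congrFun (Finsupp.equivFunOnFinite.symm.injective h) j)
  have h_of_not_p : ∀ i : Fin k → ℕ, ¬ (∀ j, p (i j)) → ∏ j, coeff (e (i j)) φ = 0 := by
    intro i hi
    push Not at hi
    obtain ⟨j, hj⟩ := hi
    refine Finset.prod_eq_zero (Finset.mem_univ j) ?_
    by_contra hne
    obtain ⟨i', hi', hei'⟩ := hφ _ hne
    exact hj (he hei' ▸ hi')
  have h_off_range : ∀ l ∈ Finset.finsuppAntidiag Finset.univ n, l ∉ Set.range f →
      ∏ j, coeff (l j) φ = 0 := by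
    intro l _ hl
    contrapose! hl
    choose i _ hi using fun j => hφ (l j) fun h => hl (Finset.prod_eq_zero (Finset.mem_univ j) h)
    exact ⟨i, Finsupp.ext hi⟩
  rw [← Fin.prod_const, coeff_prod, ← Finset.sum_preimage f _ hf.injOn _ h_off_range]
  have h_drop_p : ∀ i : Fin k → ℕ,
      ∑ᶠ (_ : (∀ j, p (i j)) ∧ ∑ j, e (i j) = n), ∏ j, coeff (e (i j)) φ
        = ∑ᶠ (_ : ∑ j, e (i j) = n), ∏ j, coeff (e (i j)) φ := by
    intro i
    by_cases hi : ∀ j, p (i j)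
    · simp only [hi, implies_true, true_and]
    · simp only [finsum_eq_if, h_of_not_p i hi, ite_self]
  rw [finsum_congr h_drop_p]
  exact (finsum_cond_eq_sum_of_cond_iff _ fun _ => by simp [f]).symm

end PowerSeries

open PowerSeries

lemma one_lt_rq : 1 < rq Fq := Fintype.one_lt_card

lemma carlitzBracket_ne_zero {i : ℕ} (hi : i ≠ 0) : carlitzBracket Fq i ≠ 0 := by
  simpa [carlitzBracket] using RatFunc.algebraMap_ne_zero
    (FiniteField.X_pow_card_pow_sub_X_ne_zero Fq hi (one_lt_rq Fq))

lemma carlitzL_ne_zero (i : ℕ) : carlitzL Fq i ≠ 0 := by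
  induction i with
  | zero => exact one_ne_zero
  | succ i ih => exact mul_ne_zero (carlitzBracket_ne_zero Fq i.succ_ne_zero) ih

def ccSeriesExponent (N i : ℕ) : ℕ := rq Fq ^ (N + i) - rq Fq ^ N

lemma rq_pow_le_rq_pow_add (N i : ℕ) : rq Fq ^ N ≤ rq Fq ^ (N + i) :=
  Nat.pow_le_pow_right (Nat.zero_lt_of_lt (one_lt_rq Fq)) (N.le_add_right i)

lemma ccSeriesExponent_strictMono (N : ℕ) : StrictMono (ccSeriesExponent Fq N) := fun a _ hab =>
  Nat.sub_lt_sub_right (rq_pow_le_rq_pow_add Fq N a)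
    (Nat.pow_lt_pow_right (one_lt_rq Fq) (Nat.add_lt_add_left hab N))

lemma ccSeriesExponent_zero {F : Type*} [Fintype F] (N : ℕ) : ccSeriesExponent F N 0 = 0 := by
  simp [ccSeriesExponent]

lemma sum_ccSeriesExponent_eq_iff {N k n : ℕ} (i : Fin k → ℕ) :
    ∑ j, ccSeriesExponent Fq N (i j) = n ↔ ∑ j, rq Fq ^ (N + i j) = n + k * rq Fq ^ N := by
  have h : ∑ j, rq Fq ^ (N + i j) = ∑ j, ccSeriesExponent Fq N (i j) + k * rq Fq ^ N := by
    rw [Finset.sum_congr rfl fun j _ => (Nat.sub_add_cancel (rq_pow_le_rq_pow_add Fq N (i j))).symm,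
      Finset.sum_add_distrib, Finset.sum_const, Finset.card_univ, Fintype.card_fin, smul_eq_mul]
    rfl
  omega

lemma coeff_ccSeries_ccSeriesExponent (N i : ℕ) :
    coeff (ccSeriesExponent Fq N i) (ccSeries Fq N)
      = (-1) ^ i * carlitzL Fq N / carlitzL Fq (N + i) := by
  rw [ccSeries, coeff_mk, Finset.sum_eq_single i]
  · exact if_pos rfl
  · exact fun j _ hji => if_neg fun h => hji ((ccSeriesExponent_strictMono Fq N).injective h).symm
  · exact fun hi => absurd (Finset.mem_range.2
      (Nat.lt_succ_of_le ((ccSeriesExponent_strictMono Fq N).id_le i))) hi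

lemma coeff_ccSeries_of_forall_ne {N m : ℕ} (hm : ∀ i, ccSeriesExponent Fq N i ≠ m) :
    coeff m (ccSeries Fq N) = 0 :=
  (coeff_mk _ _).trans (Finset.sum_eq_zero fun i _ => if_neg (hm i).symm)

lemma constantCoeff_ccSeries (N : ℕ) : constantCoeff (ccSeries Fq N) = 1 := by
  have h := coeff_ccSeries_ccSeriesExponent Fq N 0
  rwa [ccSeriesExponent_zero, pow_zero, one_mul, add_zero, div_self (carlitzL_ne_zero Fq N),
    coeff_zero_eq_constantCoeff] at h

lemma exists_ccSeriesExponent_of_coeff_one_sub_ccSeries_ne_zero {N m : ℕ}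
    (hm : coeff m (1 - ccSeries Fq N) ≠ 0) : ∃ i, 1 ≤ i ∧ ccSeriesExponent Fq N i = m := by
  by_contra! h
  apply hm
  rcases eq_or_ne m 0 with rfl | hm0
  · simp [constantCoeff_ccSeries]
  · rw [map_sub, coeff_one, if_neg hm0, coeff_ccSeries_of_forall_ne Fq, sub_zero]
    intro i
    rcases Nat.eq_zero_or_pos i with rfl | hi
    · rw [ccSeriesExponent_zero]; exact hm0.symm
    · exact h i hi

lemma coeff_one_sub_ccSeries_ccSeriesExponent {N i : ℕ} (hi : 1 ≤ i) :
    coeff (ccSeriesExponent Fq N i) (1 - ccSeries Fq N)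
      = -carlitzL Fq N * ((-1) ^ i * (carlitzL Fq (N + i))⁻¹) := by
  have hpos : ccSeriesExponent Fq N i ≠ 0 := by
    simpa [ccSeriesExponent_zero] using ((ccSeriesExponent_strictMono Fq N) hi).ne'
  rw [map_sub, coeff_one, if_neg hpos, coeff_ccSeries_ccSeriesExponent]
  ring

lemma prod_coeff_one_sub_ccSeries {N k : ℕ} {i : Fin k → ℕ} (hi : ∀ j, 1 ≤ i j) :
    ∏ j, coeff (ccSeriesExponent Fq N (i j)) (1 - ccSeries Fq N)
      = (-carlitzL Fq N) ^ k * ((-1) ^ (∑ j, i j) * ∏ j, (carlitzL Fq (N + i j))⁻¹) := by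
  rw [Finset.prod_congr rfl fun j _ => coeff_one_sub_ccSeries_ccSeriesExponent Fq (hi j),
    Finset.prod_mul_distrib, Finset.prod_mul_distrib, Finset.prod_const, Finset.card_univ,
    Fintype.card_fin, Finset.prod_pow_eq_pow_sum]

/-- explicit formula for the truncated Cauchy–Carlitz numbers. -/
theorem truncCC_explicit (N n : ℕ) (hn : 1 ≤ n) :
    truncCC Fq N n =
      carlitzPi Fq n * ∑ k ∈ Finset.Icc 1 n, (-carlitzL Fq N) ^ k *
        ∑ᶠ (i : Fin k → ℕ)
          (_ : (∀ j, 1 ≤ i j) ∧ ∑ j, rq Fq ^ (N + i j) = n + k * rq Fq ^ N),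
          (-1 : RatFunc Fq) ^ (∑ j, i j) * ∏ j, (carlitzL Fq (N + i j))⁻¹ := by
  classical
  have hconst : constantCoeff (1 - ccSeries Fq N) = 0 := by simp [constantCoeff_ccSeries]
  rw [truncCC, ← sub_sub_cancel 1 (ccSeries Fq N),
    coeff_inv_one_sub_eq_sum_coeff_pow hconst (Nat.one_le_iff_ne_zero.1 hn)]
  congr 1
  refine Finset.sum_congr rfl fun k _ => ?_
  rw [coeff_pow_eq_finsum_of_coeff_ne_zero _ (ccSeriesExponent_strictMono Fq N).injective
    (fun m => exists_ccSeriesExponent_of_coeff_one_sub_ccSeries_ne_zero Fq), mul_finsum]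
  refine finsum_congr fun i => ?_
  simp only [sum_ccSeriesExponent_eq_iff]
  rw [finsum_eq_if, finsum_eq_if, mul_ite, mul_zero]
  exact if_ctx_congr Iff.rfl (fun hi => prod_coeff_one_sub_ccSeries Fq hi.1) fun _ => rfl

end
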